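/- arXiv:2507.23296 — 3 statements merged into one kernel-verified Lean document; each statement's English description precedes it below -/
import Mathlib

section
/- Single-user communication SINR upper bound (Theorem 1, Eq. (16)): Let N_B, N_I be positive integers, σ² > 0 and P ≥ 0 real, α_IU, α_BI ∈ ℂ, and let a_B ∈ ℂ^{N_B}, a_IU ∈ ℂ^{N_I}, a_BI ∈ ℂ^{N_I}, ξ ∈ ℂ^{N_I} be vectors all of whose entries have modulus 1. Let w_c, w_s ∈ ℂ^{N_B} satisfy ‖w_c‖² + ‖w_s‖² ≤ P. Define the scalar s = ∑_{m=1}^{N_I} (a_IU)_m ξ_m conj((a_BI)_m) and the SINR γ_c = |α_IU α_BI s · (∑_n (a_B)_n (w_c)_n)|² / ( |α_IU α_BI s · (∑_n (a_B)_n (w_s)_n)|² + σ² ). Then γ_c ≤ P · N_B · |α_BI α_IU|² · N_I² / σ². -/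
/-!
Each term of `s` has modulus one, so `‖s‖ ≤ N_I` by the triangle inequality, and since `a_B`
is unimodular, Cauchy–Schwarz gives `‖∑ (a_B)ₙ (w_c)ₙ‖² ≤ N_B ‖w_c‖² ≤ N_B P`. This bounds the
numerator of `γ_c`; dropping the nonnegative interference term from the denominator leaves `σ²`.
-/

open Finset

theorem norm_sum_le_card_of_norm_le_one {ι E : Type*} [SeminormedAddCommGroup E]
    (s : Finset ι) (f : ι → E) (hf : ∀ i ∈ s, ‖f i‖ ≤ 1) :
    ‖∑ i ∈ s, f i‖ ≤ #s := by
  simpa using norm_sum_le_of_le s hf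

theorem norm_sum_mul_sq_le_card_mul_sum_norm_sq {ι R : Type*} [SeminormedRing R]
    (s : Finset ι) (a w : ι → R) (ha : ∀ i ∈ s, ‖a i‖ ≤ 1) :
    ‖∑ i ∈ s, a i * w i‖ ^ 2 ≤ #s * ∑ i ∈ s, ‖w i‖ ^ 2 := by
  have hsum : ‖∑ i ∈ s, a i * w i‖ ≤ ∑ i ∈ s, ‖w i‖ :=
    norm_sum_le_of_le s fun i hi =>
      (norm_mul_le _ _).trans (mul_le_of_le_one_left (norm_nonneg _) (ha i hi))
  calc ‖∑ i ∈ s, a i * w i‖ ^ 2 ≤ (∑ i ∈ s, ‖w i‖) ^ 2 := by gcongr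
    _ ≤ #s * ∑ i ∈ s, ‖w i‖ ^ 2 := sq_sum_le_card_mul_sum_sq

theorem single_user_sinr_upper_bound_general
    (N_B N_I : ℕ)
    (σ2 P : ℝ) (hσ2 : 0 < σ2)
    (αIU αBI : ℂ)
    (aB : Fin N_B → ℂ) (aIU aBIv ξ : Fin N_I → ℂ)
    (haB : ∀ n, ‖aB n‖ = 1)
    (haIU : ∀ m, ‖aIU m‖ = 1)
    (haBI : ∀ m, ‖aBIv m‖ = 1)
    (hξ : ∀ m, ‖ξ m‖ = 1)
    (wc ws : Fin N_B → ℂ)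
    (hpow : (∑ n, ‖wc n‖ ^ 2) + (∑ n, ‖ws n‖ ^ 2) ≤ P)
    (s : ℂ) (hs : s = ∑ m, aIU m * ξ m * (starRingEnd ℂ) (aBIv m))
    (γc : ℝ)
    (hγc : γc = ‖αIU * αBI * s * (∑ n, aB n * wc n)‖ ^ 2 /
        (‖αIU * αBI * s * (∑ n, aB n * ws n)‖ ^ 2 + σ2)) :
    γc ≤ P * N_B * ‖αBI * αIU‖ ^ 2 * N_I ^ 2 / σ2 := by
  have hs_le : ‖s‖ ≤ N_I := by
    simpa [hs] using norm_sum_le_card_of_norm_le_one univ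
      (fun m => aIU m * ξ m * starRingEnd ℂ (aBIv m)) fun m _ => by simp [haIU m, hξ m, haBI m]
  have hwc_le : ‖∑ n, aB n * wc n‖ ^ 2 ≤ N_B * P := by
    have hws : 0 ≤ ∑ n, ‖ws n‖ ^ 2 := by positivity
    calc ‖∑ n, aB n * wc n‖ ^ 2 ≤ N_B * ∑ n, ‖wc n‖ ^ 2 := by
          simpa using norm_sum_mul_sq_le_card_mul_sum_norm_sq univ aB wc fun n _ => (haB n).le
      _ ≤ N_B * P := by gcongr; linarith
  have hnum : ‖αIU * αBI * s * (∑ n, aB n * wc n)‖ ^ 2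
      ≤ P * N_B * ‖αBI * αIU‖ ^ 2 * N_I ^ 2 := by
    calc ‖αIU * αBI * s * (∑ n, aB n * wc n)‖ ^ 2
        = ‖αBI * αIU‖ ^ 2 * ‖s‖ ^ 2 * ‖∑ n, aB n * wc n‖ ^ 2 := by
          simp only [norm_mul, mul_pow]; ring
      _ ≤ ‖αBI * αIU‖ ^ 2 * N_I ^ 2 * (N_B * P) := by gcongr
      _ = P * N_B * ‖αBI * αIU‖ ^ 2 * N_I ^ 2 := by ring
  rw [hγc]
  calc _ ≤ ‖αIU * αBI * s * (∑ n, aB n * wc n)‖ ^ 2 / σ2 := by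
        gcongr; exact le_add_of_nonneg_left (sq_nonneg _)
    _ ≤ P * N_B * ‖αBI * αIU‖ ^ 2 * N_I ^ 2 / σ2 := by gcongr

/-- Single-user communication SINR upper bound (Theorem 1, Eq. (16)). -/
theorem single_user_sinr_upper_bound
    (N_B N_I : ℕ) (hNB : 0 < N_B) (hNI : 0 < N_I)
    (σ2 P : ℝ) (hσ2 : 0 < σ2) (hP : 0 ≤ P)
    (αIU αBI : ℂ)
    (aB : Fin N_B → ℂ) (aIU aBIv ξ : Fin N_I → ℂ)
    (haB : ∀ n, ‖aB n‖ = 1)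
    (haIU : ∀ m, ‖aIU m‖ = 1)
    (haBI : ∀ m, ‖aBIv m‖ = 1)
    (hξ : ∀ m, ‖ξ m‖ = 1)
    (wc ws : Fin N_B → ℂ)
    (hpow : (∑ n, ‖wc n‖ ^ 2) + (∑ n, ‖ws n‖ ^ 2) ≤ P)
    (s : ℂ) (hs : s = ∑ m, aIU m * ξ m * (starRingEnd ℂ) (aBIv m))
    (γc : ℝ)
    (hγc : γc = ‖αIU * αBI * s * (∑ n, aB n * wc n)‖ ^ 2 /
        (‖αIU * αBI * s * (∑ n, aB n * ws n)‖ ^ 2 + σ2)) :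
    γc ≤ P * N_B * ‖αBI * αIU‖ ^ 2 * N_I ^ 2 / σ2 :=
  single_user_sinr_upper_bound_general N_B N_I σ2 P hσ2 αIU αBI aB aIU aBIv ξ haB haIU haBI hξ wc ws
    hpow s hs γc hγc
end

section
/- Single-user sensing SCNR upper bound (Theorem 1, Eq. (15)): Let N_B, N_I, N_S, J be positive integers, σ² > 0 and P ≥ 0 real, α_IST, α_IS0, α_BI ∈ ℂ, and let a_B ∈ ℂ^{N_B}, a_IST ∈ ℂ^{N_I}, a_IS0 ∈ ℂ^{N_I}, a_BI ∈ ℂ^{N_I}, ξ ∈ ℂ^{N_I}, a_ST ∈ ℂ^{N_S}, a_S0 ∈ ℂ^{N_S} be vectors all of whose entries have modulus 1. Let r ∈ ℂ^{N_S} with ‖r‖ = 1 and let w_1, …, w_J ∈ ℂ^{N_B} with ∑_j ‖w_j‖² ≤ P. Define s_T = ∑_m (a_IST)_m ξ_m conj((a_BI)_m), s_0 = ∑_m (a_IS0)_m ξ_m conj((a_BI)_m), t_T = ∑_n conj(r_n) conj((a_ST)_n), t_0 = ∑_n conj(r_n) conj((a_S0)_n), and the SCNR γ_s = |α_IST α_BI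 t_T s_T|² ∑_j |∑_n (a_B)_n (w_j)_n|² / ( |α_IS0 α_BI t_0 s_0|² ∑_j |∑_n (a_B)_n (w_j)_n|² + σ² ). Then γ_s ≤ P · N_B · N_S · |α_IST α_BI|² · N_I² / σ². -/
/-!
The clutter term in the denominator is nonnegative, so the SCNR is at most the signal power over
σ². Each factor of the signal power is then bounded separately: a unit-modulus phase factor does
not change the modulus of a summand, so the triangle inequality gives `|s_T| ≤ N_I`, and
Cauchy–Schwarz against the all-ones vector gives `|t_T|² ≤ N_S ‖r‖² = N_S` and
`|a_Bᵀ w_j|² ≤ N_B ‖w_j‖²`, whence the beamforming gain is at most `N_B P`.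
-/

open Finset

section NormBounds

variable {ι E : Type*} [Fintype ι] [SeminormedAddCommGroup E]

theorem norm_sum_sq_le_card_mul_sum_sq_of_norm_le {f : ι → E} {g : ι → ℝ}
    (h : ∀ i, ‖f i‖ ≤ g i) : ‖∑ i, f i‖ ^ 2 ≤ Fintype.card ι * ∑ i, g i ^ 2 := by
  have hsum : ‖∑ i, f i‖ ≤ ∑ i, g i := norm_sum_le_of_le _ fun i _ => h i
  calc ‖∑ i, f i‖ ^ 2 ≤ (∑ i, g i) ^ 2 := pow_le_pow_left₀ (norm_nonneg _) hsum 2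
    _ ≤ Fintype.card ι * ∑ i, g i ^ 2 := by
      simpa using sq_sum_le_card_mul_sum_sq (s := univ) (f := g)

theorem norm_sum_le_card_of_norm_le_one_s1 {f : ι → E} (h : ∀ i, ‖f i‖ ≤ 1) :
    ‖∑ i, f i‖ ≤ Fintype.card ι := by
  simpa using norm_sum_le_of_le univ fun i _ => h i

end NormBounds

section SCNR

variable {ι κ : Type*} [Fintype ι] [Fintype κ]

theorem sum_norm_sq_dotProduct_le_of_norm_eq_one {a : ι → ℂ} (ha : ∀ n, ‖a n‖ = 1)
    (w : κ → ι → ℂ) :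
    ∑ j, ‖∑ n, a n * w j n‖ ^ 2 ≤ Fintype.card ι * ∑ j, ∑ n, ‖w j n‖ ^ 2 := by
  rw [mul_sum]
  refine sum_le_sum fun j _ => norm_sum_sq_le_card_mul_sum_sq_of_norm_le fun n => ?_
  rw [norm_mul, ha, one_mul]

theorem norm_sq_sum_conj_mul_conj_le_card {r a : ι → ℂ} (hr : ∑ n, ‖r n‖ ^ 2 = 1)
    (ha : ∀ n, ‖a n‖ = 1) :
    ‖∑ n, starRingEnd ℂ (r n) * starRingEnd ℂ (a n)‖ ^ 2 ≤ Fintype.card ι := by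
  simpa [hr] using norm_sum_sq_le_card_mul_sum_sq_of_norm_le (g := fun n => ‖r n‖) fun n => by
    rw [norm_mul, Complex.norm_conj, Complex.norm_conj, ha, mul_one]

theorem norm_sum_mul_mul_conj_le_card {a ξ b : ι → ℂ} (ha : ∀ m, ‖a m‖ = 1)
    (hξ : ∀ m, ‖ξ m‖ = 1) (hb : ∀ m, ‖b m‖ = 1) :
    ‖∑ m, a m * ξ m * starRingEnd ℂ (b m)‖ ≤ Fintype.card ι :=
  norm_sum_le_card_of_norm_le_one_s1 fun m => by
    rw [norm_mul, norm_mul, Complex.norm_conj, ha, hξ, hb, one_mul, one_mul]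

end SCNR

theorem single_user_scnr_upper_bound_general
    (N_B N_I N_S J : ℕ)
    (σ2 P : ℝ) (hσ2 : 0 < σ2)
    (αIST αIS0 αBI : ℂ)
    (aB : Fin N_B → ℂ) (aISTv aBIv ξ : Fin N_I → ℂ) (aST : Fin N_S → ℂ)
    (haB : ∀ n, ‖aB n‖ = 1)
    (haIST : ∀ m, ‖aISTv m‖ = 1)
    (haBI : ∀ m, ‖aBIv m‖ = 1)
    (hξ : ∀ m, ‖ξ m‖ = 1)
    (haST : ∀ n, ‖aST n‖ = 1)
    (r : Fin N_S → ℂ) (hr : Real.sqrt (∑ n, ‖r n‖ ^ 2) = 1)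
    (w : Fin J → Fin N_B → ℂ)
    (hw : (∑ j, ∑ n, ‖w j n‖ ^ 2) ≤ P)
    (sT s0 tT t0 : ℂ)
    (hsT : sT = ∑ m, aISTv m * ξ m * (starRingEnd ℂ) (aBIv m))
    (htT : tT = ∑ n, (starRingEnd ℂ) (r n) * (starRingEnd ℂ) (aST n))
    (γs : ℝ)
    (hγs : γs =
        ‖αIST * αBI * tT * sT‖ ^ 2 * (∑ j, ‖∑ n, aB n * w j n‖ ^ 2) /
        (‖αIS0 * αBI * t0 * s0‖ ^ 2 * (∑ j, ‖∑ n, aB n * w j n‖ ^ 2)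
          + σ2)) :
    γs ≤ P * N_B * N_S * ‖αIST * αBI‖ ^ 2 * N_I ^ 2 / σ2 := by
  set G := ∑ j, ‖∑ n, aB n * w j n‖ ^ 2
  have hG_nonneg : 0 ≤ G := sum_nonneg fun j _ => sq_nonneg _
  have hG : G ≤ N_B * P := by
    simpa using (sum_norm_sq_dotProduct_le_of_norm_eq_one haB w).trans
      (mul_le_mul_of_nonneg_left hw (Nat.cast_nonneg _))
  have htT_le : ‖tT‖ ^ 2 ≤ N_S := by
    simpa [htT] using norm_sq_sum_conj_mul_conj_le_card (Real.sqrt_eq_one.mp hr) haST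
  have hsT_le : ‖sT‖ ^ 2 ≤ (N_I : ℝ) ^ 2 := by
    refine pow_le_pow_left₀ (norm_nonneg _) ?_ 2
    simpa [hsT] using norm_sum_mul_mul_conj_le_card haIST hξ haBI
  have hsignal :
      ‖αIST * αBI * tT * sT‖ ^ 2 * G ≤ P * N_B * N_S * ‖αIST * αBI‖ ^ 2 * N_I ^ 2 :=
    calc ‖αIST * αBI * tT * sT‖ ^ 2 * G
        = ‖αIST * αBI‖ ^ 2 * ‖tT‖ ^ 2 * ‖sT‖ ^ 2 * G := by
          rw [norm_mul, norm_mul]; ring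
      _ ≤ ‖αIST * αBI‖ ^ 2 * N_S * N_I ^ 2 * (N_B * P) := by gcongr
      _ = P * N_B * N_S * ‖αIST * αBI‖ ^ 2 * N_I ^ 2 := by ring
  have hclutter : σ2 ≤ ‖αIS0 * αBI * t0 * s0‖ ^ 2 * G + σ2 :=
    le_add_of_nonneg_left (by positivity)
  rw [hγs]
  exact div_le_div₀ ((by positivity : (0 : ℝ) ≤ _).trans hsignal) hsignal hσ2 hclutter

/-- Single-user sensing SCNR upper bound (Theorem 1, Eq. (15)). -/
theorem single_user_scnr_upper_bound
    (N_B N_I N_S J : ℕ) (hNB : 0 < N_B) (hNI : 0 < N_I) (hNS : 0 < N_S) (hJ : 0 < J)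
    (σ2 P : ℝ) (hσ2 : 0 < σ2) (hP : 0 ≤ P)
    (αIST αIS0 αBI : ℂ)
    (aB : Fin N_B → ℂ) (aISTv aIS0v aBIv ξ : Fin N_I → ℂ) (aST aS0 : Fin N_S → ℂ)
    (haB : ∀ n, ‖aB n‖ = 1)
    (haIST : ∀ m, ‖aISTv m‖ = 1)
    (haIS0 : ∀ m, ‖aIS0v m‖ = 1)
    (haBI : ∀ m, ‖aBIv m‖ = 1)
    (hξ : ∀ m, ‖ξ m‖ = 1)
    (haST : ∀ n, ‖aST n‖ = 1)
    (haS0 : ∀ n, ‖aS0 n‖ = 1)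
    (r : Fin N_S → ℂ) (hr : Real.sqrt (∑ n, ‖r n‖ ^ 2) = 1)
    (w : Fin J → Fin N_B → ℂ)
    (hw : (∑ j, ∑ n, ‖w j n‖ ^ 2) ≤ P)
    (sT s0 tT t0 : ℂ)
    (hsT : sT = ∑ m, aISTv m * ξ m * (starRingEnd ℂ) (aBIv m))
    (hs0 : s0 = ∑ m, aIS0v m * ξ m * (starRingEnd ℂ) (aBIv m))
    (htT : tT = ∑ n, (starRingEnd ℂ) (r n) * (starRingEnd ℂ) (aST n))
    (ht0 : t0 = ∑ n, (starRingEnd ℂ) (r n) * (starRingEnd ℂ) (aS0 n))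
    (γs : ℝ)
    (hγs : γs =
        ‖αIST * αBI * tT * sT‖ ^ 2 * (∑ j, ‖∑ n, aB n * w j n‖ ^ 2) /
        (‖αIS0 * αBI * t0 * s0‖ ^ 2 * (∑ j, ‖∑ n, aB n * w j n‖ ^ 2)
          + σ2)) :
    γs ≤ P * N_B * N_S * ‖αIST * αBI‖ ^ 2 * N_I ^ 2 / σ2 :=
  single_user_scnr_upper_bound_general N_B N_I N_S J σ2 P hσ2 αIST αIS0 αBI aB aISTv aBIv ξ aST haB
    haIST haBI hξ haST r hr w hw sT s0 tT t0 hsT htT γs hγs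
end

section
/- Achievability of the sensing upper bound under the PPR conditions (Theorem 1 / Step 2–3 of Algorithm 1): With the notation of the single-user SCNR γ_s, take J = 1 with the single transmit beamformer w_1 = √(P/N_B) · conj(a_B), receive combiner r = conj(a_ST)/√(N_S), and suppose N_I ≥ 2 and there is θ₀ ∈ ℝ such that for every m = 1,…,N_I: (a_IST)_m ξ_m conj((a_BI)_m) = exp(i θ₀) and (a_IS0)_m ξ_m conj((a_BI)_m) = exp(2πi (m−1)/N_I). Then the clutter term vanishes (s_0 = 0) and γ_s = P · N_B · N_S · |α_IST α_BI|² · N_I² / σ², i.e., the SCNR upper bound is attained with equality. -/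
/-!
The clutter phases prescribed at the IRS are the `N_I`-th roots of unity, whose sum vanishes, so
the clutter term `s₀` is zero and the SCNR reduces to an SNR. The target phases are all equal, so
`s_T` adds coherently to modulus `N_I`; likewise the matched beamformer and combiner turn the
unit-modulus steering vectors into coherent sums of gains `P N_B` and `N_S`.
-/

open Complex ComplexConjugate

theorem Complex.mul_conj_of_norm_eq_one {z : ℂ} (hz : ‖z‖ = 1) : z * conj z = 1 := by
  rw [mul_conj', hz]; norm_num

theorem sum_fin_exp_two_pi_I_mul_div_eq_zero {n : ℕ} (hn : 1 < n) :
    ∑ m : Fin n, exp (2 * Real.pi * I * ((m : ℕ) : ℂ) / n) = 0 := by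
  have hζ := isPrimitiveRoot_exp n (by omega)
  calc ∑ m : Fin n, exp (2 * Real.pi * I * ((m : ℕ) : ℂ) / n)
      = ∑ m ∈ Finset.range n, exp (2 * Real.pi * I / n) ^ m := by
        rw [Fin.sum_univ_eq_sum_range (fun m => exp (2 * Real.pi * I * (m : ℂ) / n))]
        refine Finset.sum_congr rfl fun m _ => ?_
        rw [← exp_nat_mul]; ring_nf
    _ = 0 := hζ.geom_sum_eq_zero hn

theorem norm_sq_sum_matched_beamformer {N : ℕ} {a : Fin N → ℂ} (ha : ∀ n, ‖a n‖ = 1)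
    {P : ℝ} (hP : 0 ≤ P) :
    ‖∑ n, a n * ((√(P / N) : ℂ) * conj (a n))‖ ^ 2 = P * N := by
  have hterm : ∀ n, a n * ((√(P / N) : ℂ) * conj (a n)) = √(P / N) := fun n => by
    rw [mul_left_comm, Complex.mul_conj_of_norm_eq_one (ha n), mul_one]
  simp only [hterm, Finset.sum_const, Finset.card_univ, Fintype.card_fin, nsmul_eq_mul]
  rw [norm_mul, mul_pow, norm_real, Real.norm_of_nonneg (Real.sqrt_nonneg _),
    Real.sq_sqrt (by positivity), norm_natCast]
  rcases N.eq_zero_or_pos with rfl | hN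
  · simp
  · field_simp

theorem norm_sq_sum_matched_combiner {N : ℕ} {a : Fin N → ℂ} (ha : ∀ n, ‖a n‖ = 1) :
    ‖∑ n, conj (conj (a n) / (√N : ℂ)) * conj (a n)‖ ^ 2 = N := by
  have hterm : ∀ n, conj (conj (a n) / (√N : ℂ)) * conj (a n) = 1 / √N := fun n => by
    rw [map_div₀, conj_conj, conj_ofReal, div_mul_eq_mul_div, Complex.mul_conj_of_norm_eq_one (ha n)]
  simp only [hterm, Finset.sum_const, Finset.card_univ, Fintype.card_fin, nsmul_eq_mul]
  rw [norm_mul, mul_pow, norm_div, norm_one, norm_real, Real.norm_of_nonneg (Real.sqrt_nonneg _),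
    div_pow, Real.sq_sqrt (Nat.cast_nonneg N), norm_natCast]
  rcases N.eq_zero_or_pos with rfl | hN
  · simp
  · field_simp

theorem sensing_upper_bound_achieved_general
    (N_B N_I N_S : ℕ) (hNI : 2 ≤ N_I)
    (σ2 P : ℝ) (hP : 0 ≤ P)
    (αIST αIS0 αBI : ℂ)
    (aB : Fin N_B → ℂ) (aISTv aIS0v aBIv ξ : Fin N_I → ℂ) (aST : Fin N_S → ℂ)
    (haB : ∀ n, ‖aB n‖ = 1)
    (haST : ∀ n, ‖aST n‖ = 1)
    (w : Fin N_B → ℂ)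
    (hw : w = fun n => (Real.sqrt (P / N_B) : ℂ) * (starRingEnd ℂ) (aB n))
    (r : Fin N_S → ℂ)
    (hr : r = fun n => (starRingEnd ℂ) (aST n) / (Real.sqrt N_S : ℂ))
    (θ0 : ℝ)
    (halignT : ∀ m, aISTv m * ξ m * (starRingEnd ℂ) (aBIv m) = Complex.exp (Complex.I * θ0))
    (halign0 : ∀ m : Fin N_I, aIS0v m * ξ m * (starRingEnd ℂ) (aBIv m)
        = Complex.exp (2 * Real.pi * Complex.I * ((m : ℕ) : ℂ) / (N_I : ℂ)))
    (sT s0 tT t0 : ℂ)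
    (hsT : sT = ∑ m, aISTv m * ξ m * (starRingEnd ℂ) (aBIv m))
    (hs0 : s0 = ∑ m, aIS0v m * ξ m * (starRingEnd ℂ) (aBIv m))
    (htT : tT = ∑ n, (starRingEnd ℂ) (r n) * (starRingEnd ℂ) (aST n))
    (γs : ℝ)
    (hγs : γs =
        ‖αIST * αBI * tT * sT‖ ^ 2 * ‖∑ n, aB n * w n‖ ^ 2 /
        (‖αIS0 * αBI * t0 * s0‖ ^ 2 * ‖∑ n, aB n * w n‖ ^ 2 + σ2)) :
    s0 = 0 ∧ γs = P * N_B * N_S * ‖αIST * αBI‖ ^ 2 * N_I ^ 2 / σ2 := by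
  have hs0_eq : s0 = 0 := by
    simpa only [hs0, halign0] using sum_fin_exp_two_pi_I_mul_div_eq_zero hNI
  have hsT_norm : ‖sT‖ = N_I := by
    simp [hsT, halignT, mul_comm I, norm_exp_ofReal_mul_I]
  have htT_norm : ‖tT‖ ^ 2 = N_S := by
    simpa only [htT, hr] using norm_sq_sum_matched_combiner haST
  have hgain : ‖∑ n, aB n * w n‖ ^ 2 = P * N_B := by
    simpa only [hw] using norm_sq_sum_matched_beamformer haB hP
  refine ⟨hs0_eq, ?_⟩
  rw [hγs, hs0_eq, mul_zero, norm_zero, zero_pow two_ne_zero, zero_mul, zero_add, hgain,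
    norm_mul, norm_mul, mul_pow, mul_pow, htT_norm, hsT_norm]
  ring

/-- Achievability of the sensing upper bound under the PPR conditions
(Theorem 1 / Step 2–3 of Algorithm 1), with `J = 1` transmit beamformer. -/
theorem sensing_upper_bound_achieved
    (N_B N_I N_S : ℕ) (hNB : 0 < N_B) (hNI : 2 ≤ N_I) (hNS : 0 < N_S)
    (σ2 P : ℝ) (hσ2 : 0 < σ2) (hP : 0 ≤ P)
    (αIST αIS0 αBI : ℂ)
    (aB : Fin N_B → ℂ) (aISTv aIS0v aBIv ξ : Fin N_I → ℂ) (aST aS0 : Fin N_S → ℂ)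
    (haB : ∀ n, ‖aB n‖ = 1)
    (haIST : ∀ m, ‖aISTv m‖ = 1)
    (haIS0 : ∀ m, ‖aIS0v m‖ = 1)
    (haBI : ∀ m, ‖aBIv m‖ = 1)
    (hξ : ∀ m, ‖ξ m‖ = 1)
    (haST : ∀ n, ‖aST n‖ = 1)
    (haS0 : ∀ n, ‖aS0 n‖ = 1)
    (w : Fin N_B → ℂ)
    (hw : w = fun n => (Real.sqrt (P / N_B) : ℂ) * (starRingEnd ℂ) (aB n))
    (r : Fin N_S → ℂ)
    (hr : r = fun n => (starRingEnd ℂ) (aST n) / (Real.sqrt N_S : ℂ))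
    (θ0 : ℝ)
    (halignT : ∀ m, aISTv m * ξ m * (starRingEnd ℂ) (aBIv m) = Complex.exp (Complex.I * θ0))
    (halign0 : ∀ m : Fin N_I, aIS0v m * ξ m * (starRingEnd ℂ) (aBIv m)
        = Complex.exp (2 * Real.pi * Complex.I * ((m : ℕ) : ℂ) / (N_I : ℂ)))
    (sT s0 tT t0 : ℂ)
    (hsT : sT = ∑ m, aISTv m * ξ m * (starRingEnd ℂ) (aBIv m))
    (hs0 : s0 = ∑ m, aIS0v m * ξ m * (starRingEnd ℂ) (aBIv m))
    (htT : tT = ∑ n, (starRingEnd ℂ) (r n) * (starRingEnd ℂ) (aST n))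
    (ht0 : t0 = ∑ n, (starRingEnd ℂ) (r n) * (starRingEnd ℂ) (aS0 n))
    (γs : ℝ)
    (hγs : γs =
        ‖αIST * αBI * tT * sT‖ ^ 2 * ‖∑ n, aB n * w n‖ ^ 2 /
        (‖αIS0 * αBI * t0 * s0‖ ^ 2 * ‖∑ n, aB n * w n‖ ^ 2 + σ2)) :
    s0 = 0 ∧ γs = P * N_B * N_S * ‖αIST * αBI‖ ^ 2 * N_I ^ 2 / σ2 :=
  sensing_upper_bound_achieved_general N_B N_I N_S hNI σ2 P hP αIST αIS0 αBI aB aISTv aIS0v aBIv ξ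
    aST haB haST w hw r hr θ0 halignT halign0 sT s0 tT t0 hsT hs0 htT γs hγs
end
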